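/- Let α > 0, ζ ∈ ℝ, and define f₂(v) = v·₁F₂((ζ+1)/4; 3/4, 5/4; v⁴/(16α)) and f₃(v) = v²·₁F₂((ζ+2)/4; 5/4, 3/2; v⁴/(16α)). Then both f₂ and f₃ satisfy α·f'''(v) − v²·f'(v) − ζ·v·f(v) = 0 for all v ∈ ℝ. -/

import Mathlib

open Real

/-- Pochhammer symbol `(a)ₙ = a(a+1)⋯(a+n-1)`. -/
noncomputable def poch (a : ℝ) (n : ℕ) : ℝ := ∏ i ∈ Finset.range n, (a + i)

/-- The generalized hypergeometric function `₁F₂(a; b₁, b₂; z)`. -/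
noncomputable def oneF2 (a b₁ b₂ z : ℝ) : ℝ :=
  ∑' n : ℕ, poch a n * z ^ n / (poch b₁ n * poch b₂ n * (n.factorial : ℝ))

/-!
Write `f(v) = ∑ₙ cₙ v^(4n+m)` with `m ∈ {1, 2}` and `cₙ = ((ζ+m)/4)ₙ / ((b₁)ₙ (b₂)ₙ n! (16α)ⁿ)`.
The coefficients decay like `Kⁿ / n!`, so the series can be differentiated termwise on all of `ℝ`.
The operator `α∂³ - v²∂ - ζv` sends `vᵏ` to `α k(k-1)(k-2) v^(k-3) - (k+ζ) v^(k+1)`. As `m < 3`, the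
lowest term of the first sum vanishes; after shifting the index the two sums cancel term by term
by the recurrence `α (4n+m+4)(4n+m+3)(4n+m+2) cₙ₊₁ = (ζ+4n+m) cₙ`, which is the ratio of consecutive
`₁F₂` coefficients exactly when `{b₁, b₂, 1} = {(m+2)/4, (m+3)/4, (m+4)/4}`.
-/
theorem abs_mul_pow_le_of_le (c : ℕ → ℝ) {e : ℕ → ℕ} {p q : ℕ}
    (he : ∀ n, e n ≤ p * n + q) {x R : ℝ} (hx : |x| ≤ R) (hR : 1 ≤ R) (n : ℕ) :
    |c n * x ^ e n| ≤ R ^ q * (|c n| * (R ^ p) ^ n) := by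
  rw [abs_mul, abs_pow]
  calc |c n| * |x| ^ e n ≤ |c n| * R ^ (p * n + q) := by
        gcongr
        exact (pow_le_pow_left₀ (abs_nonneg x) hx _).trans (pow_le_pow_right₀ hR (he n))
    _ = R ^ q * (|c n| * (R ^ p) ^ n) := by ring

theorem natCast_mul_pow_sub_one_mul_sq (k : ℕ) (x : ℝ) :
    (k : ℝ) * x ^ (k - 1) * x ^ 2 = k * x ^ (k + 1) := by
  cases k with
  | zero => simp
  | succ k => push_cast; ring

def IsEntireCoeff (c : ℕ → ℝ) : Prop :=
  ∀ R : ℝ, Summable fun n => |c n| * R ^ n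

namespace IsEntireCoeff

variable {c : ℕ → ℝ}

theorem mul_of_abs_le (hc : IsEntireCoeff c) {d : ℕ → ℝ} {B L : ℝ}
    (hd : ∀ n, |d n| ≤ B * L ^ n) : IsEntireCoeff fun n => c n * d n := by
  intro R
  refine ((hc (L * |R|)).mul_left B).of_norm_bounded fun n => ?_
  simp only [Real.norm_eq_abs, abs_mul, abs_abs, abs_pow, mul_pow]
  calc |c n| * |d n| * |R| ^ n ≤ |c n| * (B * L ^ n) * |R| ^ n := by gcongr; exact hd n
    _ = B * (|c n| * (L ^ n * |R| ^ n)) := by ring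

theorem mul_descFactorial (hc : IsEntireCoeff c) {e : ℕ → ℕ} {p q : ℕ}
    (he : ∀ n, e n ≤ p * n + q) (k : ℕ) :
    IsEntireCoeff fun n => c n * (e n).descFactorial k := by
  refine hc.mul_of_abs_le (B := ((p + q) ^ k : ℕ)) (L := ((2 ^ k : ℕ) : ℝ)) fun n => ?_
  rw [Nat.abs_cast, ← Nat.cast_pow, ← Nat.cast_mul, Nat.cast_le]
  calc (e n).descFactorial k ≤ (e n) ^ k := Nat.descFactorial_le_pow _ _
    _ ≤ ((p + q) * 2 ^ n) ^ k := by
        gcongr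
        nlinarith [he n, Nat.lt_two_pow_self (n := n), Nat.one_le_two_pow (n := n)]
    _ = (p + q) ^ k * (2 ^ k) ^ n := by rw [mul_pow, ← pow_mul, ← pow_mul, mul_comm n k]

theorem summable_mul_pow (hc : IsEntireCoeff c) {e : ℕ → ℕ} {p q : ℕ}
    (he : ∀ n, e n ≤ p * n + q) (x : ℝ) : Summable fun n => c n * x ^ e n :=
  ((hc _).mul_left _).of_norm_bounded
    (abs_mul_pow_le_of_le c he (le_max_left |x| 1) (le_max_right _ _))

theorem summable_mul_descFactorial_mul_pow (hc : IsEntireCoeff c) {e : ℕ → ℕ} {p q : ℕ}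
    (he : ∀ n, e n ≤ p * n + q) (k : ℕ) (x : ℝ) :
    Summable fun n => c n * (e n).descFactorial k * x ^ (e n - k) :=
  (hc.mul_descFactorial he k).summable_mul_pow (e := fun n => e n - k)
    (fun n => (Nat.sub_le _ _).trans (he n)) x

theorem hasDerivAt_tsum_mul_pow (hc : IsEntireCoeff c) {e : ℕ → ℕ} {p q : ℕ}
    (he : ∀ n, e n ≤ p * n + q) (x : ℝ) :
    HasDerivAt (fun y => ∑' n, c n * y ^ e n) (∑' n, c n * e n * x ^ (e n - 1)) x := by
  set R := |x| + 1
  have hR : 1 ≤ R := le_add_of_nonneg_left (abs_nonneg x)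
  have hc' : IsEntireCoeff fun n => c n * e n := by simpa using hc.mul_descFactorial he 1
  have hx : x ∈ Metric.ball (0 : ℝ) R := by
    rw [mem_ball_zero_iff, Real.norm_eq_abs]; exact lt_add_one _
  refine hasDerivAt_tsum_of_isPreconnected (g := fun n y => c n * y ^ e n)
    (g' := fun n y => c n * e n * y ^ (e n - 1)) ((hc' (R ^ p)).mul_left (R ^ q))
    Metric.isOpen_ball (convex_ball (0 : ℝ) R).isPreconnected
    (fun n y _ => ?_) (fun n y hy => ?_) hx (hc.summable_mul_pow he x) hx
  · simpa only [mul_assoc] using (hasDerivAt_pow (e n) y).const_mul (c n)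
  · rw [mem_ball_zero_iff, Real.norm_eq_abs] at hy
    exact abs_mul_pow_le_of_le (fun n => c n * e n) (e := fun n => e n - 1)
      (fun n => (Nat.sub_le _ _).trans (he n)) hy.le hR n

theorem iterate_deriv_tsum_mul_pow (hc : IsEntireCoeff c) {e : ℕ → ℕ} {p q : ℕ}
    (he : ∀ n, e n ≤ p * n + q) (k : ℕ) :
    deriv^[k] (fun x => ∑' n, c n * x ^ e n) =
      fun x => ∑' n, c n * (e n).descFactorial k * x ^ (e n - k) := by
  induction k with
  | zero => simp
  | succ k ih =>
    funext x
    rw [Function.iterate_succ_apply', ih, ((hc.mul_descFactorial he k).hasDerivAt_tsum_mul_pow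
      (e := fun n => e n - k) (fun n => (Nat.sub_le _ _).trans (he n)) x).deriv]
    refine tsum_congr fun n => ?_
    rw [Nat.descFactorial_succ, Nat.sub_sub]
    push_cast
    ring

theorem ode_of_recurrence (hc : IsEntireCoeff c) {α ζ : ℝ} {m : ℕ} (hm : m < 3)
    (hrec : ∀ n : ℕ, α * ((4 * n + m + 4) * (4 * n + m + 3) * (4 * n + m + 2)) * c (n + 1) =
      (ζ + (4 * n + m)) * c n)
    {f : ℝ → ℝ} (hf : f = fun x => ∑' n, c n * x ^ (4 * n + m)) (v : ℝ) :
    α * deriv (deriv (deriv f)) v - v ^ 2 * deriv f v - ζ * v * f v = 0 := by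
  have he : ∀ n, 4 * n + m ≤ 4 * n + 2 := fun n => by omega
  rw [show deriv (deriv (deriv f)) = deriv^[3] f from rfl, show deriv f = deriv^[1] f from rfl,
    hf, hc.iterate_deriv_tsum_mul_pow he, hc.iterate_deriv_tsum_mul_pow he]
  have hhigh : α * ∑' n, c n * (4 * n + m).descFactorial 3 * v ^ (4 * n + m - 3) =
      ∑' n, (ζ + (4 * n + m)) * c n * v ^ (4 * n + m + 1) := by
    rw [← tsum_mul_left,
      ((hc.summable_mul_descFactorial_mul_pow he 3 v).mul_left α).tsum_eq_zero_add]
    simp only [Nat.descFactorial_eq_zero_iff_lt.mpr hm, Nat.cast_zero, mul_zero, zero_mul,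
      zero_add]
    refine tsum_congr fun n => ?_
    have hexp : 4 * (n + 1) + m = (4 * n + m + 1) + 3 := by ring
    rw [hexp, Nat.add_sub_cancel, Nat.succ_descFactorial_succ, Nat.succ_descFactorial_succ,
      Nat.succ_descFactorial_succ, Nat.descFactorial_zero]
    push_cast
    linear_combination v ^ (4 * n + m + 1) * hrec n
  have hlow : v ^ 2 * ∑' n, c n * (4 * n + m).descFactorial 1 * v ^ (4 * n + m - 1) +
      ζ * v * ∑' n, c n * v ^ (4 * n + m) =
      ∑' n, (ζ + (4 * n + m)) * c n * v ^ (4 * n + m + 1) := by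
    simp only [Nat.descFactorial_one]
    rw [← tsum_mul_left, ← tsum_mul_left, ← Summable.tsum_add]
    · refine tsum_congr fun n => ?_
      have := natCast_mul_pow_sub_one_mul_sq (4 * n + m) v
      push_cast at this ⊢
      linear_combination c n * this
    · simpa only [Nat.descFactorial_one] using
        (hc.summable_mul_descFactorial_mul_pow he 1 v).mul_left (v ^ 2)
    · exact (hc.summable_mul_pow he v).mul_left _
  linear_combination hhigh - hlow

end IsEntireCoeff

open Nat Finset in
theorem natCast_factorial_eq_prod (n : ℕ) : (n ! : ℝ) = ∏ i ∈ range n, ((i : ℝ) + 1) := by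
  rw [← prod_range_add_one_eq_factorial]; push_cast; rfl

theorem poch_succ (a : ℝ) (n : ℕ) : poch a (n + 1) = poch a n * (a + n) :=
  Finset.prod_range_succ _ _

open Nat Finset in
theorem abs_poch_le (a : ℝ) (n : ℕ) : |poch a n| ≤ (|a| + 1) ^ n * n ! := by
  rw [poch, abs_prod, natCast_factorial_eq_prod,
    show (|a| + 1) ^ n = ∏ _i ∈ range n, (|a| + 1) by simp, ← prod_mul_distrib]
  refine prod_le_prod (fun i _ => abs_nonneg _) fun i _ => ?_
  have hi : (0 : ℝ) ≤ i := i.cast_nonneg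
  calc |a + i| ≤ |a| + i := (abs_add_le _ _).trans_eq (by rw [abs_of_nonneg hi])
    _ ≤ (|a| + 1) * (i + 1) := by nlinarith [abs_nonneg a]

open Nat Finset in
theorem pow_mul_factorial_le_poch {β b : ℝ} (hβ : 0 ≤ β) (hβ₁ : β ≤ 1) (hb : β ≤ b) (n : ℕ) :
    β ^ n * n ! ≤ poch b n := by
  rw [poch, natCast_factorial_eq_prod, show β ^ n = ∏ _i ∈ range n, β by simp,
    ← prod_mul_distrib]
  refine prod_le_prod (fun i _ => by positivity) fun i _ => ?_
  have hi : (0 : ℝ) ≤ i := i.cast_nonneg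
  nlinarith

noncomputable def oneF2Coeff (a b₁ b₂ : ℝ) (n : ℕ) : ℝ :=
  poch a n / (poch b₁ n * poch b₂ n * n.factorial)

theorem oneF2_eq_tsum (a b₁ b₂ z : ℝ) : oneF2 a b₁ b₂ z = ∑' n, oneF2Coeff a b₁ b₂ n * z ^ n :=
  tsum_congr fun _ => mul_div_right_comm _ _ _

theorem oneF2Coeff_succ (a b₁ b₂ : ℝ) (n : ℕ) :
    oneF2Coeff a b₁ b₂ (n + 1) =
      oneF2Coeff a b₁ b₂ n * ((a + n) / ((b₁ + n) * (b₂ + n) * (n + 1))) := by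
  rw [oneF2Coeff, oneF2Coeff, poch_succ, poch_succ, poch_succ, Nat.factorial_succ,
    ← mul_div_mul_comm]
  push_cast
  ring

open Nat in
theorem abs_oneF2Coeff_le {β b₁ b₂ : ℝ} (a : ℝ) (hβ : 0 < β) (hβ₁ : β ≤ 1) (hb₁ : β ≤ b₁)
    (hb₂ : β ≤ b₂) (n : ℕ) : |oneF2Coeff a b₁ b₂ n| ≤ ((|a| + 1) / β ^ 2) ^ n / n ! := by
  have h₁ := pow_mul_factorial_le_poch hβ.le hβ₁ hb₁ n
  have h₂ := pow_mul_factorial_le_poch hβ.le hβ₁ hb₂ n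
  have hn : (1 : ℝ) ≤ n ! := by exact_mod_cast n.factorial_pos
  have hp₁ : 0 < poch b₁ n := (show (0 : ℝ) < β ^ n * (n ! : ℝ) by positivity).trans_le h₁
  have hp₂ : 0 < poch b₂ n := (show (0 : ℝ) < β ^ n * (n ! : ℝ) by positivity).trans_le h₂
  rw [oneF2Coeff, abs_div, abs_of_pos (a := poch b₁ n * _ * _) (by positivity)]
  calc |poch a n| / (poch b₁ n * poch b₂ n * n !)
      ≤ (|a| + 1) ^ n * n ! / (β ^ n * n ! * (β ^ n * n !) * n !) := by
        gcongr
        exact abs_poch_le a n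
    _ = ((|a| + 1) / β ^ 2) ^ n / n ! / n ! := by
        rw [div_pow]
        field_simp
        ring
    _ ≤ ((|a| + 1) / β ^ 2) ^ n / n ! := div_le_self (by positivity) hn

theorem isEntireCoeff_oneF2Coeff (a : ℝ) {b₁ b₂ : ℝ} (hb₁ : 0 < b₁) (hb₂ : 0 < b₂) :
    IsEntireCoeff (oneF2Coeff a b₁ b₂) := by
  set β := min (min b₁ b₂) 1
  have hβ : 0 < β := lt_min (lt_min hb₁ hb₂) one_pos
  intro R
  refine (Real.summable_pow_div_factorial ((|a| + 1) / β ^ 2 * |R|)).of_norm_bounded fun n => ?_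
  rw [Real.norm_eq_abs, abs_mul, abs_abs, abs_pow, mul_pow, mul_div_right_comm]
  gcongr
  exact abs_oneF2Coeff_le a hβ (min_le_right _ _) ((min_le_left _ _).trans (min_le_left _ _))
    ((min_le_left _ _).trans (min_le_right _ _)) n

theorem ode_mul_oneF2 {α ζ b₁ b₂ : ℝ} {m : ℕ} (hα : α ≠ 0) (hm : m < 3) (hb₁ : 0 < b₁)
    (hb₂ : 0 < b₂)
    (hb : ∀ n : ℕ, 64 * ((b₁ + n) * (b₂ + n) * (n + 1)) =
      (4 * n + m + 4) * (4 * n + m + 3) * (4 * n + m + 2))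
    {f : ℝ → ℝ} (hf : ∀ x, f x = x ^ m * oneF2 ((ζ + m) / 4) b₁ b₂ (x ^ 4 / (16 * α)))
    (v : ℝ) : α * deriv (deriv (deriv f)) v - v ^ 2 * deriv f v - ζ * v * f v = 0 := by
  set c : ℕ → ℝ := fun n => oneF2Coeff ((ζ + m) / 4) b₁ b₂ n * (16 * α)⁻¹ ^ n
  have hc : IsEntireCoeff c := (isEntireCoeff_oneF2Coeff _ hb₁ hb₂).mul_of_abs_le
    (B := 1) (L := |(16 * α)⁻¹|) fun n => by rw [abs_pow, one_mul]
  refine hc.ode_of_recurrence hm (fun n => ?_) (funext fun x => ?_) v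
  · have : (b₁ + n) * (b₂ + n) * (n + 1) ≠ 0 := by positivity
    simp only [c, oneF2Coeff_succ, pow_succ]
    field_simp
    linear_combination -(ζ + m + 4 * n) * oneF2Coeff ((ζ + m) / 4) b₁ b₂ n * hb n
  · rw [hf, oneF2_eq_tsum, ← tsum_mul_left]
    refine tsum_congr fun n => ?_
    ring

theorem stmt8 (α ζ : ℝ) (hα : 0 < α) (f₂ f₃ : ℝ → ℝ)
    (hf₂ : ∀ v : ℝ, f₂ v = v * oneF2 ((ζ + 1) / 4) (3 / 4) (5 / 4) (v ^ 4 / (16 * α)))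
    (hf₃ : ∀ v : ℝ, f₃ v = v ^ 2 * oneF2 ((ζ + 2) / 4) (5 / 4) (3 / 2) (v ^ 4 / (16 * α))) :
    (∀ v : ℝ,
      α * deriv (deriv (deriv f₂)) v - v ^ 2 * deriv f₂ v - ζ * v * f₂ v = 0) ∧
    (∀ v : ℝ,
      α * deriv (deriv (deriv f₃)) v - v ^ 2 * deriv f₃ v - ζ * v * f₃ v = 0) := by
  constructor
  · refine ode_mul_oneF2 (m := 1) (b₁ := 3 / 4) (b₂ := 5 / 4) hα.ne' (by norm_num) (by norm_num)
      (by norm_num) (fun n => by push_cast; ring) fun v => ?_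
    rw [hf₂]; norm_num
  · refine ode_mul_oneF2 (m := 2) (b₁ := 5 / 4) (b₂ := 3 / 2) hα.ne' (by norm_num) (by norm_num)
      (by norm_num) (fun n => by push_cast; ring) fun v => ?_
    rw [hf₃]; norm_num
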